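/- Let r be a positive integer and let m, n be integers with m ≥ 2r + 1 and n ≥ 2r + 1. Then the curling number of the r-th power of the tadpole graph T_{m,n} equals m + n − 2(2r − 1). -/

import Mathlib

open Finset

/-- The degree of a vertex `v` in a simple graph `G`: the number of its neighbours. -/
noncomputable def gdeg {V : Type*} (G : SimpleGraph V) (v : V) : ℕ :=
  (G.neighborSet v).ncard

/-- The curling number of a finite simple graph: the maximum number of vertices
of `G` sharing a common degree. -/
noncomputable def curlingNumber {V : Type*} [Fintype V] (G : SimpleGraph V) : ℕ :=
  Finset.univ.sup fun v => (Finset.univ.filter fun u => gdeg G u = gdeg G v).card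

/-- The `r`-th power of a simple graph `G`: same vertex set, two distinct vertices
adjacent iff their distance in `G` is (finite and) at most `r`. -/
def SimpleGraph.power {V : Type*} (G : SimpleGraph V) (r : ℕ) : SimpleGraph V where
  Adj u v := u ≠ v ∧ G.Reachable u v ∧ G.dist u v ≤ r
  symm := by
    constructor
    beta_reduce
    rintro u v ⟨h1, h2, h3⟩
    exact ⟨h1.symm, h2.symm, by rwa [SimpleGraph.dist_comm]⟩
  loopless := by
    constructor
    beta_reduce
    rintro v ⟨h1, -, -⟩
    exact h1 rfl

/-- The tadpole graph `T_{m,n}`: a cycle on `m` vertices and a path on `n` vertices,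
joined by a bridge from vertex `0` of the cycle to the end vertex `0` of the path. -/
def tadpoleGraph (m n : ℕ) : SimpleGraph (Fin m ⊕ Fin n) where
  Adj u v :=
    match u, v with
    | Sum.inl i, Sum.inl j => (SimpleGraph.cycleGraph m).Adj i j
    | Sum.inr i, Sum.inr j => (SimpleGraph.pathGraph n).Adj i j
    | Sum.inl i, Sum.inr j => (i : ℕ) = 0 ∧ (j : ℕ) = 0
    | Sum.inr i, Sum.inl j => (i : ℕ) = 0 ∧ (j : ℕ) = 0
  symm := by
    constructor
    beta_reduce
    rintro (i | i) (j | j) h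
    · exact h.symm
    · exact ⟨h.2, h.1⟩
    · exact ⟨h.2, h.1⟩
    · exact h.symm
  loopless := by
    constructor
    beta_reduce
    rintro (i | i) h
    · exact h.ne rfl
    · exact h.ne rfl

/-!
Distances in `T_{m,n}` are given by an explicit formula `tadpoleDist`: the cyclic distance
inside the cycle, and otherwise the way through the bridge. The formula is certified locally: it
grows by at most one along every edge, and from every vertex other than the target some edge
decreases it, so it is the graph distance. Counting the vertices within distance `r` then gives every degree of the `r`-th
power. A cycle vertex at cyclic distance `c` from the attachment vertex has degree
`2r + (r - c)`, and path vertex `j` sees `min r j + min r (n - 1 - j)` path vertices and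
`2(r - j) - 1` cycle vertices. So degree `2r` is attained by the `m - 2r + 1` cycle vertices
with `c ≥ r` and the `n - 2r + 1` path vertices with `r - 1 ≤ j ≤ n - 1 - r`, while any other
degree is shared by at most two cycle vertices and one path vertex, hence by at most
`3 < m + n - 2(2r - 1)` vertices.
-/

open Sum

namespace SimpleGraph

variable {V : Type*} {G : SimpleGraph V} {f : V → ℕ}

lemma Walk.le_add_length_of_adj (hf : ∀ x y, G.Adj x y → f x ≤ f y + 1) {u v : V}
    (w : G.Walk u v) : f u ≤ f v + w.length := by
  induction w with
  | nil => simp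
  | cons h _ ih => have := hf _ _ h; rw [Walk.length_cons]; omega

lemma exists_walk_length_le_of_exists_adj_lt {v : V}
    (hf : ∀ x ≠ v, ∃ y, G.Adj x y ∧ f y < f x) (u : V) : ∃ w : G.Walk u v, w.length ≤ f u := by
  induction hu : f u using Nat.strong_induction_on generalizing u with
  | _ k ih =>
    by_cases huv : u = v
    · subst huv
      exact ⟨.nil, Nat.zero_le _⟩
    · obtain ⟨y, hadj, hlt⟩ := hf u huv
      obtain ⟨w, hw⟩ := ih (f y) (hu ▸ hlt) y rfl
      exact ⟨.cons hadj w, by rw [Walk.length_cons]; omega⟩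

lemma reachable_and_dist_eq_of_exists_adj_lt {v : V} (hv : f v = 0)
    (hle : ∀ x y, G.Adj x y → f x ≤ f y + 1) (hlt : ∀ x ≠ v, ∃ y, G.Adj x y ∧ f y < f x)
    (u : V) : G.Reachable u v ∧ G.dist u v = f u := by
  obtain ⟨w, hw⟩ := exists_walk_length_le_of_exists_adj_lt hlt u
  refine ⟨⟨w⟩, le_antisymm ((dist_le w).trans hw) ?_⟩
  obtain ⟨p, hp⟩ := Reachable.exists_walk_length_eq_dist ⟨w⟩
  have := p.le_add_length_of_adj hle
  omega

end SimpleGraph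

lemma gdeg_eq_card_filter {V : Type*} [Fintype V] {G : SimpleGraph V} {v : V} {p : V → Prop}
    [DecidablePred p] (hp : ∀ u, G.Adj v u ↔ p u) : gdeg G v = #{u | p u} := by
  rw [gdeg, ← Set.ncard_coe_finset]
  congr
  ext u
  simp [hp]

lemma curlingNumber_eq_of_forall_card_le {V : Type*} [Fintype V] (G : SimpleGraph V) (v : V)
    (h : ∀ w, #{u | gdeg G u = gdeg G w} ≤ #{u | gdeg G u = gdeg G v}) :
    curlingNumber G = #{u | gdeg G u = gdeg G v} :=
  le_antisymm (Finset.sup_le fun w _ => h w)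
    (Finset.le_sup (f := fun w => #{u | gdeg G u = gdeg G w}) (mem_univ v))

lemma Finset.card_filter_sum {α β : Type*} [Fintype α] [Fintype β] (p : α ⊕ β → Prop)
    [DecidablePred p] : #{u | p u} = #{a | p (inl a)} + #{b | p (inr b)} := by
  rw [← card_toLeft_add_card_toRight]
  congr 2 <;> ext <;> simp

lemma Fin.card_filter_val {m : ℕ} (p : ℕ → Prop) [DecidablePred p] :
    #{i : Fin m | p i} = #{x ∈ range m | p x} := by
  rw [← Nat.Iio_eq_range, ← Fin.map_valEmbedding_univ, filter_map, card_map]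
  rfl

lemma card_filter_range_mod_add {m a : ℕ} (ha : a < m) (p : ℕ → Prop) [DecidablePred p] :
    #{x ∈ range m | p ((x + a) % m)} = #{x ∈ range m | p x} := by
  have hinv : ∀ b c, b + c = m → ∀ x < m, ((x + b) % m + c) % m = x := fun b c hbc x hx => by
    rw [Nat.mod_add_mod, add_assoc, hbc, Nat.add_mod_right, Nat.mod_eq_of_lt hx]
  refine card_nbij' (fun x => (x + a) % m) (fun y => (y + (m - a)) % m) ?_ ?_ ?_ ?_
  · intro x hx
    simp only [mem_coe, mem_filter, mem_range] at hx ⊢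
    exact ⟨Nat.mod_lt _ (by omega), hx.2⟩
  · intro y hy
    simp only [mem_coe, mem_filter, mem_range] at hy ⊢
    exact ⟨Nat.mod_lt _ (by omega), by rw [hinv _ _ (by omega) y hy.1]; exact hy.2⟩
  · intro x hx
    exact hinv _ _ (by omega) x (by simpa using (mem_filter.1 hx).1)
  · intro y hy
    exact hinv _ _ (by omega) y (by simpa using (mem_filter.1 hy).1)

def cycleDist (m a b : ℕ) : ℕ := min (Nat.dist a b) (m - Nat.dist a b)

lemma cycleDist_mod_add {m a x : ℕ} (ha : a < m) (hx : x < m) :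
    cycleDist m a ((x + a) % m) = cycleDist m 0 x := by
  rcases lt_or_ge (x + a) m with h | h
  · rw [Nat.mod_eq_of_lt h]
    simp only [cycleDist, Nat.dist]
    omega
  · rw [Nat.mod_eq_sub_mod h, Nat.mod_eq_of_lt (by omega)]
    simp only [cycleDist, Nat.dist]
    omega

lemma cycleGraph_adj_iff_cycleDist_eq_one {m : ℕ} {a b : Fin m} :
    (SimpleGraph.cycleGraph m).Adj a b ↔ cycleDist m a b = 1 := by
  rw [SimpleGraph.cycleGraph_adj', cycleDist, Nat.dist]
  rcases lt_trichotomy a b with h | rfl | h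
  · rw [Fin.coe_sub_iff_lt.2 h, Fin.sub_val_of_le h.le]
    rw [Fin.lt_def] at h
    omega
  · simp [Fin.sub_val_of_le le_rfl]
  · rw [Fin.coe_sub_iff_lt.2 h, Fin.sub_val_of_le h.le]
    rw [Fin.lt_def] at h
    omega

lemma exists_cycleGraph_adj_cycleDist_lt {m : ℕ} {a : Fin m} {c : ℕ} (hc : c < m)
    (hac : a.val ≠ c) :
    ∃ b, (SimpleGraph.cycleGraph m).Adj a b ∧ cycleDist m b c < cycleDist m a c := by
  simp only [cycleGraph_adj_iff_cycleDist_eq_one]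
  obtain ⟨s, hs⟩ : ∃ s : Fin m, s.val = if a.val + 1 = m then 0 else a.val + 1 :=
    ⟨⟨if a.val + 1 = m then 0 else a.val + 1, by split_ifs <;> omega⟩, rfl⟩
  obtain ⟨p, hp⟩ : ∃ p : Fin m, p.val = if a.val = 0 then m - 1 else a.val - 1 :=
    ⟨⟨if a.val = 0 then m - 1 else a.val - 1, by split_ifs <;> omega⟩, rfl⟩
  have : cycleDist m s c < cycleDist m a c ∨ cycleDist m p c < cycleDist m a c := by
    simp only [cycleDist, Nat.dist]; split_ifs at hs hp <;> omega
  rcases this with h | h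
  · exact ⟨s, by simp only [cycleDist, Nat.dist]; split_ifs at hs <;> omega, h⟩
  · exact ⟨p, by simp only [cycleDist, Nat.dist]; split_ifs at hp <;> omega, h⟩

lemma exists_pathGraph_adj_dist_lt {n : ℕ} {j k : Fin n} (hjk : j ≠ k) :
    ∃ i, (SimpleGraph.pathGraph n).Adj j i ∧ Nat.dist i k < Nat.dist j k := by
  simp only [SimpleGraph.pathGraph_adj]
  rw [Ne, Fin.ext_iff] at hjk
  rcases Nat.lt_or_gt_of_ne hjk with h | h
  · exact ⟨⟨j + 1, by omega⟩, .inl rfl, by simp only [Nat.dist]; omega⟩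
  · exact ⟨⟨j - 1, by omega⟩, .inr (Nat.sub_add_cancel (by omega)),
      by simp only [Nat.dist]; omega⟩

def tadpoleDist (m n : ℕ) : Fin m ⊕ Fin n → Fin m ⊕ Fin n → ℕ
  | inl a, inl b => cycleDist m a b
  | inl a, inr k => cycleDist m a 0 + 1 + k
  | inr j, inl b => j + 1 + cycleDist m 0 b
  | inr j, inr k => Nat.dist j k

section TadpoleDist

variable {m n : ℕ}

@[simp] lemma tadpoleGraph_adj_inl_inl {a b : Fin m} :
    (tadpoleGraph m n).Adj (inl a) (inl b) ↔ cycleDist m a b = 1 :=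
  cycleGraph_adj_iff_cycleDist_eq_one

@[simp] lemma tadpoleGraph_adj_inr_inr {j k : Fin n} :
    (tadpoleGraph m n).Adj (inr j) (inr k) ↔ j.val + 1 = k.val ∨ k.val + 1 = j.val :=
  SimpleGraph.pathGraph_adj

@[simp] lemma tadpoleGraph_adj_inl_inr {a : Fin m} {k : Fin n} :
    (tadpoleGraph m n).Adj (inl a) (inr k) ↔ a.val = 0 ∧ k.val = 0 := Iff.rfl

@[simp] lemma tadpoleGraph_adj_inr_inl {j : Fin n} {b : Fin m} :
    (tadpoleGraph m n).Adj (inr j) (inl b) ↔ j.val = 0 ∧ b.val = 0 := Iff.rfl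

lemma tadpoleDist_le_of_adj {u x : Fin m ⊕ Fin n} (h : (tadpoleGraph m n).Adj u x)
    (v : Fin m ⊕ Fin n) : tadpoleDist m n u v ≤ tadpoleDist m n x v + 1 := by
  rcases u with a | a <;> rcases x with b | b <;> rcases v with c | c <;>
    simp only [tadpoleGraph_adj_inl_inl, tadpoleGraph_adj_inr_inr, tadpoleGraph_adj_inl_inr,
      tadpoleGraph_adj_inr_inl, tadpoleDist, cycleDist, Nat.dist] at h ⊢ <;> omega

lemma exists_tadpoleGraph_adj_tadpoleDist_lt {u v : Fin m ⊕ Fin n} (huv : u ≠ v) :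
    ∃ x, (tadpoleGraph m n).Adj u x ∧ tadpoleDist m n x v < tadpoleDist m n u v := by
  rcases u with a | j <;> rcases v with c | k
  · obtain ⟨b, hab, hb⟩ :=
      exists_cycleGraph_adj_cycleDist_lt c.isLt (by simpa [Fin.ext_iff] using huv)
    exact ⟨inl b, hab, hb⟩
  · by_cases ha : a.val = 0
    · exact ⟨inr ⟨0, k.pos⟩, by simp [ha], by simp [tadpoleDist, Nat.dist]⟩
    · obtain ⟨b, hab, hb⟩ := exists_cycleGraph_adj_cycleDist_lt (show 0 < m by omega) ha
      exact ⟨inl b, hab, by simp only [tadpoleDist]; omega⟩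
  · by_cases hj : j.val = 0
    · exact ⟨inl ⟨0, c.pos⟩, by simp [hj], by simp [tadpoleDist, hj]⟩
    · exact ⟨inr ⟨j - 1, by omega⟩, by simp; omega, by simp [tadpoleDist]; omega⟩
  · obtain ⟨i, hji, hi⟩ := exists_pathGraph_adj_dist_lt (by simpa using huv)
    exact ⟨inr i, hji, hi⟩

lemma tadpoleGraph_reachable_and_dist_eq (u v : Fin m ⊕ Fin n) :
    (tadpoleGraph m n).Reachable u v ∧ (tadpoleGraph m n).dist u v = tadpoleDist m n u v :=
  SimpleGraph.reachable_and_dist_eq_of_exists_adj_lt (f := (tadpoleDist m n · v))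
    (by rcases v with a | j <;> simp [tadpoleDist, cycleDist])
    (fun _ _ h => tadpoleDist_le_of_adj h v)
    (fun _ hx => exists_tadpoleGraph_adj_tadpoleDist_lt hx) u

lemma tadpoleGraph_power_adj {r : ℕ} {u v : Fin m ⊕ Fin n} :
    ((tadpoleGraph m n).power r).Adj u v ↔ u ≠ v ∧ tadpoleDist m n u v ≤ r := by
  obtain ⟨hreach, hdist⟩ := tadpoleGraph_reachable_and_dist_eq u v
  change u ≠ v ∧ _ ∧ _ ↔ _
  rw [hdist]
  simp [hreach]

end TadpoleDist

lemma card_filter_ne_and_cycleDist_le {m r a : ℕ} (hr : 2 * r < m) (ha : a < m) :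
    #{x ∈ range m | a ≠ x ∧ cycleDist m a x ≤ r} = 2 * r := by
  have hrot : ∀ x ∈ range m, (a ≠ (x + a) % m ∧ cycleDist m a ((x + a) % m) ≤ r ↔
      x ≠ 0 ∧ cycleDist m 0 x ≤ r) := fun x hx => by
    rw [mem_range] at hx
    rw [cycleDist_mod_add ha hx]
    rcases lt_or_ge (x + a) m with h | h
    · rw [Nat.mod_eq_of_lt h]; omega
    · rw [Nat.mod_eq_sub_mod h, Nat.mod_eq_of_lt (by omega)]; omega
  have hball : ({x ∈ range m | x ≠ 0 ∧ cycleDist m 0 x ≤ r} : Finset ℕ) =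
      Ico 1 (r + 1) ∪ Ico (m - r) m := by
    ext x
    simp only [mem_filter, mem_range, mem_union, mem_Ico]
    simp only [cycleDist, Nat.dist]
    omega
  rw [← card_filter_range_mod_add ha, filter_congr hrot, hball,
    card_union_of_disjoint (disjoint_left.2 fun x => by simp only [mem_Ico]; omega),
    Nat.card_Ico, Nat.card_Ico]
  omega

lemma card_filter_ne_and_dist_le {n r j : ℕ} (hj : j < n) :
    #{k ∈ range n | j ≠ k ∧ Nat.dist j k ≤ r} = min r j + min r (n - 1 - j) := by
  have hball : ({k ∈ range n | j ≠ k ∧ Nat.dist j k ≤ r} : Finset ℕ) =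
      Ico (j - r) j ∪ Ico (j + 1) (min n (j + r + 1)) := by
    ext k
    simp only [mem_filter, mem_range, mem_union, mem_Ico, lt_min_iff]
    simp only [Nat.dist]
    omega
  rw [hball, card_union_of_disjoint (disjoint_left.2 fun x => by simp only [mem_Ico]; omega),
    Nat.card_Ico, Nat.card_Ico]
  omega

lemma card_filter_cycleDist_zero_le {m r c : ℕ} (hr : 2 * r < m) :
    #{x ∈ range m | c + 1 + cycleDist m 0 x ≤ r} = 2 * (r - c) - 1 := by
  have hball : ({x ∈ range m | c + 1 + cycleDist m 0 x ≤ r} : Finset ℕ) =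
      range (r - c) ∪ Ico (m + c + 1 - r) m := by
    ext x
    simp only [mem_filter, mem_range, mem_union, mem_Ico]
    simp only [cycleDist, Nat.dist]
    omega
  rw [hball,
    card_union_of_disjoint (disjoint_left.2 fun x => by simp only [mem_range, mem_Ico]; omega),
    card_range, Nat.card_Ico]
  omega

def cycleDegree (m r a : ℕ) : ℕ := 2 * r + (r - cycleDist m a 0)

/-- Truncated subtraction makes the last summand, the number of cycle vertices within distance `r`
of path vertex `j`, vanish for `j ≥ r`. -/
def pathDegree (n r j : ℕ) : ℕ := min r j + min r (n - 1 - j) + (2 * (r - j) - 1)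

section PowerDegree

variable {m n r : ℕ}

lemma gdeg_tadpoleGraph_power_inl (hm : 2 * r < m) (hn : r ≤ n) (a : Fin m) :
    gdeg ((tadpoleGraph m n).power r) (inl a) = cycleDegree m r a := by
  rw [gdeg_eq_card_filter fun _ => tadpoleGraph_power_adj, card_filter_sum]
  simp only [tadpoleDist, ne_eq, inl.injEq, reduceCtorEq, not_false_eq_true, true_and,
    Fin.ext_iff]
  rw [Fin.card_filter_val fun x => ¬a.val = x ∧ cycleDist m a x ≤ r,
    Fin.card_filter_val fun k => cycleDist m a 0 + 1 + k ≤ r,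
    card_filter_ne_and_cycleDist_le hm a.isLt]
  have hpath : {k ∈ range n | cycleDist m a 0 + 1 + k ≤ r} = range (r - cycleDist m a 0) := by
    ext k
    simp only [mem_filter, mem_range]
    omega
  rw [hpath, card_range, cycleDegree]

lemma gdeg_tadpoleGraph_power_inr (hm : 2 * r < m) (j : Fin n) :
    gdeg ((tadpoleGraph m n).power r) (inr j) = pathDegree n r j := by
  rw [gdeg_eq_card_filter fun _ => tadpoleGraph_power_adj, card_filter_sum]
  simp only [tadpoleDist, ne_eq, inr.injEq, reduceCtorEq, not_false_eq_true, true_and,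
    Fin.ext_iff]
  rw [Fin.card_filter_val fun x => j.val + 1 + cycleDist m 0 x ≤ r,
    Fin.card_filter_val fun k => ¬j.val = k ∧ Nat.dist j k ≤ r,
    card_filter_cycleDist_zero_le hm, card_filter_ne_and_dist_le j.isLt, pathDegree]
  omega

lemma card_gdeg_tadpoleGraph_power_eq (hm : 2 * r < m) (hn : r ≤ n) (d : ℕ) :
    #{u | gdeg ((tadpoleGraph m n).power r) u = d} =
      #{a ∈ range m | cycleDegree m r a = d} + #{j ∈ range n | pathDegree n r j = d} := by
  rw [card_filter_sum]
  simp only [gdeg_tadpoleGraph_power_inl hm hn, gdeg_tadpoleGraph_power_inr hm]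
  rw [Fin.card_filter_val fun a => cycleDegree m r a = d,
    Fin.card_filter_val fun j => pathDegree n r j = d]

lemma card_cycleDegree_eq_two_mul (hr : 0 < r) :
    #{a ∈ range m | cycleDegree m r a = 2 * r} = m + 1 - 2 * r := by
  have hclass :
      ({a ∈ range m | cycleDegree m r a = 2 * r} : Finset ℕ) = Ico r (m + 1 - r) := by
    ext a
    simp only [mem_filter, mem_range, mem_Ico]
    simp only [cycleDegree, cycleDist, Nat.dist]
    omega
  rw [hclass, Nat.card_Ico]
  omega

lemma card_pathDegree_eq_two_mul (hr : 0 < r) (hn : 2 * r < n) :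
    #{j ∈ range n | pathDegree n r j = 2 * r} = n + 1 - 2 * r := by
  have hclass :
      ({j ∈ range n | pathDegree n r j = 2 * r} : Finset ℕ) = Ico (r - 1) (n - r) := by
    ext j
    simp only [mem_filter, mem_range, mem_Ico]
    simp only [pathDegree]
    omega
  rw [hclass, Nat.card_Ico]
  omega

lemma card_cycleDegree_eq_le_two {d : ℕ} (hd : d ≠ 2 * r) :
    #{a ∈ range m | cycleDegree m r a = d} ≤ 2 := by
  have hclass :
      ({a ∈ range m | cycleDegree m r a = d} : Finset ℕ) ⊆ {3 * r - d, m - (3 * r - d)} := by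
    intro a ha
    simp only [mem_filter, mem_range, mem_insert, mem_singleton] at ha ⊢
    simp only [cycleDegree, cycleDist, Nat.dist] at ha
    omega
  exact (card_le_card hclass).trans card_le_two

lemma card_pathDegree_eq_le_one {d : ℕ} (hn : 2 * r < n) (hd : d ≠ 2 * r) :
    #{j ∈ range n | pathDegree n r j = d} ≤ 1 := by
  refine card_le_one.2 fun i hi j hj => ?_
  simp only [mem_filter, mem_range] at hi hj
  simp only [pathDegree] at hi hj
  omega

end PowerDegree

/-- For `r ≥ 1` and `m, n ≥ 2r + 1`, the curling number of the `r`-th power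
of the tadpole graph `T_{m,n}` is `m + n - 2(2r - 1)`. -/
theorem curlingNumber_tadpoleGraph_power (r m n : ℕ) (hr : 1 ≤ r)
    (hm : 2 * r + 1 ≤ m) (hn : 2 * r + 1 ≤ n) :
    curlingNumber ((tadpoleGraph m n).power r) = m + n - 2 * (2 * r - 1) := by
  set G := (tadpoleGraph m n).power r
  set v : Fin m ⊕ Fin n := inl ⟨r, by omega⟩
  have hclass := card_gdeg_tadpoleGraph_power_eq (by omega : 2 * r < m) (by omega : r ≤ n)
  have hv : gdeg G v = 2 * r := by
    rw [gdeg_tadpoleGraph_power_inl (by omega) (by omega)]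
    simp only [cycleDegree, cycleDist, Nat.dist]
    omega
  have hmax : #{u | gdeg G u = 2 * r} = m + n - 2 * (2 * r - 1) := by
    rw [hclass, card_cycleDegree_eq_two_mul hr, card_pathDegree_eq_two_mul hr (by omega)]
    omega
  have hbound : ∀ w, #{u | gdeg G u = gdeg G w} ≤ #{u | gdeg G u = gdeg G v} := by
    intro w
    rw [hv]
    by_cases hd : gdeg G w = 2 * r
    · rw [hd]
    · rw [hmax, hclass]
      have := card_cycleDegree_eq_le_two (m := m) hd
      have := card_pathDegree_eq_le_one (by omega : 2 * r < n) hd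
      omega
  rw [curlingNumber_eq_of_forall_card_le G v hbound, hv, hmax]
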